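/- Let X, Y ∈ ℤ^{n×n} be symmetric with equal characteristic polynomials, let ζ, η ∈ ℤⁿ, and let p be a prime. Suppose rank_p(W_{X,ζ}) = n−1, rank_p(W_{Y,η}) = n−1, and the characteristic polynomial φ_X(λ) = det(λI − X), reduced modulo p, does not have two distinct roots in 𝔽_p. Then for every V ∈ ℤⁿ, W_{X,ζ} V ≡ 0 (mod p) holds if and only if W_{Y,η} V ≡ 0 (mod p). -/

import Mathlib

/-!
Over a field, the walk matrix `W_{A,z}` sends the coefficient vector of a polynomial `g` of degree
`< n` to `g(A) z`, so its kernel consists of the multiples of degree `< n` of the generator `m` of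
the order ideal of `z`. A one-dimensional kernel forces `deg m = n - 1`; as `m` divides the
characteristic polynomial, the latter is `m · (X - a)`, with `a` one of its roots. When the
characteristic polynomial has only one root, the two walk matrices share `a`, hence `m`, hence
their kernels.
-/

open Matrix

/-- The walk matrix `[ζ, Xζ, X²ζ, …, X^{n−1}ζ]`: its `j`-th column is `X^j ζ`. -/
def walkMatrix {n : ℕ} {R : Type*} [CommRing R]
    (X : Matrix (Fin n) (Fin n) R) (ζ : Fin n → R) : Matrix (Fin n) (Fin n) R :=
  Matrix.of fun i j => ((X ^ (j : ℕ)) *ᵥ ζ) i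

open Polynomial Module

section CommRing

variable {R : Type*} [CommRing R] {n : ℕ}

theorem walkMatrix_map {S : Type*} [CommRing S] (f : R →+* S)
    (A : Matrix (Fin n) (Fin n) R) (z : Fin n → R) :
    (walkMatrix A z).map f = walkMatrix (A.map f) (f ∘ z) := by
  ext i j
  simp [walkMatrix, RingHom.map_mulVec, ← Matrix.map_pow]

theorem aeval_eq_sum_degreeLTEquiv {A : Type*} [Semiring A] [Algebra R A] (p : R[X]_n) (a : A) :
    aeval a (p : R[X]) = ∑ j, degreeLTEquiv R n p j • a ^ (j : ℕ) := by
  rw [aeval_def, eval₂_eq_sum, ← sum_fin _ (by simp) (mem_degreeLT.mp p.2)]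
  simp only [Algebra.smul_def]
  rfl

theorem walkMatrix_mulVec_degreeLTEquiv (A : Matrix (Fin n) (Fin n) R) (z : Fin n → R)
    (p : R[X]_n) :
    walkMatrix A z *ᵥ degreeLTEquiv R n p = aeval A (p : R[X]) *ᵥ z := by
  ext i
  simp only [aeval_eq_sum_degreeLTEquiv, walkMatrix, mulVec, dotProduct, of_apply,
    Matrix.sum_apply, Matrix.smul_apply, smul_eq_mul, Finset.sum_mul]
  rw [Finset.sum_comm]
  exact Finset.sum_congr rfl fun j _ => Finset.sum_congr rfl fun k _ => by ring

end CommRing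

section Field

variable {K : Type*} [Field K] {n : ℕ}

theorem natDegree_add_one_eq_of_finrank_multiples_eq_one {f : K[X]} (hf : f ≠ 0)
    (h : finrank K (((Ideal.span {f}).restrictScalars K).comap (degreeLT K n).subtype) = 1) :
    f.natDegree + 1 = n := by
  set S := ((Ideal.span {f}).restrictScalars K).comap (degreeLT K n).subtype
  have mem_S (p : K[X]_n) : p ∈ S ↔ f ∣ (p : K[X]) := Ideal.mem_span_singleton
  have hlt : f.natDegree < n := by
    obtain ⟨p, hpS, hp0⟩ :=
      Submodule.exists_mem_ne_zero_of_ne_bot (Submodule.one_le_finrank_iff.1 h.ge)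
    have hp0' : (p : K[X]) ≠ 0 := Subtype.coe_ne_coe.2 hp0
    exact (natDegree_le_of_dvd ((mem_S p).1 hpS) hp0').trans_lt
      ((natDegree_lt_iff_degree_lt hp0').2 (mem_degreeLT.1 p.2))
  by_contra hne
  have hXf : (X * f).natDegree < n := by rw [natDegree_mul X_ne_zero hf, natDegree_X]; omega
  let pf : K[X]_n := ⟨f, mem_degreeLT.2 (degree_le_natDegree.trans_lt (by exact_mod_cast hlt))⟩
  let pXf : K[X]_n :=
    ⟨X * f, mem_degreeLT.2 (degree_le_natDegree.trans_lt (by exact_mod_cast hXf))⟩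
  obtain ⟨c, hc⟩ := (finrank_eq_one_iff_of_nonzero' (⟨pf, (mem_S pf).2 dvd_rfl⟩ : S)
    (by simpa [Subtype.ext_iff, pf] using hf)).1 h ⟨pXf, (mem_S pXf).2 (dvd_mul_left f X)⟩
  have hcf : C c * f = X * f := by
    simpa [Subtype.ext_iff, pf, pXf, smul_eq_C_mul] using hc
  exact X_ne_C c (mul_right_cancel₀ hf hcf).symm

/-- The order ideal `{g | g(A) z = 0}` of `z`, for the `K[X]`-module structure on `K^n` in which
`X` acts as `A`. -/
noncomputable def orderIdeal (A : Matrix (Fin n) (Fin n) K) (z : Fin n → K) : Ideal K[X] :=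
  Ideal.torsionOf K[X] (Module.AEval' (Matrix.toLinAlgEquiv' A)) (Module.AEval'.of _ z)

section OrderIdeal

variable (A : Matrix (Fin n) (Fin n) K) (z : Fin n → K)

theorem mem_orderIdeal {g : K[X]} : g ∈ orderIdeal A z ↔ aeval A g *ᵥ z = 0 := by
  rw [orderIdeal, Ideal.mem_torsionOf_iff, ← Module.AEval.of_aeval_smul, aeval_algHom_apply]
  simp

theorem charpoly_mem_orderIdeal : A.charpoly ∈ orderIdeal A z := by
  rw [mem_orderIdeal, aeval_self_charpoly, zero_mulVec]

theorem walkMatrix_mulVec_eq_zero_iff (p : K[X]_n) :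
    walkMatrix A z *ᵥ degreeLTEquiv K n p = 0 ↔ (p : K[X]) ∈ orderIdeal A z := by
  rw [walkMatrix_mulVec_degreeLTEquiv, mem_orderIdeal]

theorem finrank_orderIdeal_degreeLT_eq_one (hn : 0 < n) (hrank : (walkMatrix A z).rank = n - 1) :
    finrank K (((orderIdeal A z).restrictScalars K).comap (degreeLT K n).subtype) = 1 := by
  have hker : ((orderIdeal A z).restrictScalars K).comap (degreeLT K n).subtype =
      (LinearMap.ker (walkMatrix A z).mulVecLin).comap (degreeLTEquiv K n).toLinearMap := by
    ext p
    simp [walkMatrix_mulVec_eq_zero_iff]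
  rw [hker, Submodule.comap_equiv_eq_map_symm, LinearEquiv.finrank_map_eq]
  have := LinearMap.finrank_range_add_finrank_ker (walkMatrix A z).mulVecLin
  rw [Module.finrank_fin_fun, ← Matrix.rank, hrank] at this
  omega

theorem exists_orderIdeal_eq_span_and_charpoly_eq_mul (hn : 0 < n)
    (hrank : (walkMatrix A z).rank = n - 1) :
    ∃ f a, orderIdeal A z = Ideal.span {f} ∧ A.charpoly = f * (X - C a) := by
  classical
  obtain ⟨g, hg⟩ := Submodule.IsPrincipal.principal (orderIdeal A z)
  have hg0 : g ≠ 0 := by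
    rintro rfl
    have := charpoly_mem_orderIdeal A z
    rw [hg, Submodule.span_singleton_eq_bot.2 rfl, Submodule.mem_bot] at this
    exact (charpoly_monic A).ne_zero this
  set f := normalize g
  have hI : orderIdeal A z = Ideal.span {f} := by
    rw [hg, ← Ideal.span_singleton_eq_span_singleton.2 (associated_normalize g)]
  have hfmonic : f.Monic := monic_normalize hg0
  obtain ⟨q, hq⟩ := Ideal.mem_span_singleton.1 (hI ▸ charpoly_mem_orderIdeal A z)
  have hfdeg := natDegree_add_one_eq_of_finrank_multiples_eq_one hfmonic.ne_zero
    (hI ▸ finrank_orderIdeal_degreeLT_eq_one A z hn hrank)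
  have hqmonic : q.Monic := hfmonic.of_mul_monic_left (hq ▸ charpoly_monic A)
  have hqdeg : q.natDegree = 1 := by
    have := congrArg natDegree hq
    rw [natDegree_mul hfmonic.ne_zero hqmonic.ne_zero, charpoly_natDegree_eq_dim,
      Fintype.card_fin] at this
    omega
  refine ⟨f, -q.coeff 0, hI, ?_⟩
  rw [hq, map_neg, sub_neg_eq_add, ← hqmonic.eq_X_add_C hqdeg]

end OrderIdeal

theorem walkMatrix_mulVec_eq_zero_iff_of_charpoly_eq {A B : Matrix (Fin n) (Fin n) K}
    {z w : Fin n → K} (hchar : A.charpoly = B.charpoly)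
    (hA : (walkMatrix A z).rank = n - 1) (hB : (walkMatrix B w).rank = n - 1)
    (hroots : ∀ a b, A.charpoly.IsRoot a → A.charpoly.IsRoot b → a = b) (v : Fin n → K) :
    walkMatrix A z *ᵥ v = 0 ↔ walkMatrix B w *ᵥ v = 0 := by
  rcases n.eq_zero_or_pos with rfl | hn
  · exact iff_of_true (Subsingleton.elim _ _) (Subsingleton.elim _ _)
  obtain ⟨f, a, hIA, hfa⟩ := exists_orderIdeal_eq_span_and_charpoly_eq_mul A z hn hA
  obtain ⟨g, b, hIB, hgb⟩ := exists_orderIdeal_eq_span_and_charpoly_eq_mul B w hn hB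
  obtain rfl : a = b := hroots a b (by simp [hfa]) (by simp [hchar, hgb])
  obtain rfl : f = g := mul_right_cancel₀ (X_sub_C_ne_zero a) (hfa.symm.trans (hchar.trans hgb))
  rw [← (degreeLTEquiv K n).apply_symm_apply v, walkMatrix_mulVec_eq_zero_iff,
    walkMatrix_mulVec_eq_zero_iff, hIA, hIB]

end Field

theorem walk_kernels_eq_of_no_two_distinct_roots_general
    {n : ℕ} (X Y : Matrix (Fin n) (Fin n) ℤ) (ζ η : Fin n → ℤ)
    (hchar : X.charpoly = Y.charpoly)
    (p : ℕ) [Fact p.Prime]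
    (hrankX : ((walkMatrix X ζ).map (Int.cast : ℤ → ZMod p)).rank = n - 1)
    (hrankY : ((walkMatrix Y η).map (Int.cast : ℤ → ZMod p)).rank = n - 1)
    (hroots : ∀ a b : ZMod p, (X.charpoly.map (Int.castRingHom (ZMod p))).IsRoot a →
      (X.charpoly.map (Int.castRingHom (ZMod p))).IsRoot b → a = b) :
    ∀ V : Fin n → ℤ,
      (∀ i, (((walkMatrix X ζ *ᵥ V) i : ℤ) : ZMod p) = 0) ↔
      (∀ i, (((walkMatrix Y η *ᵥ V) i : ℤ) : ZMod p) = 0) := by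
  intro V
  set φ := Int.castRingHom (ZMod p)
  have reduce (M : Matrix (Fin n) (Fin n) ℤ) (w : Fin n → ℤ) :
      (∀ i, (((walkMatrix M w *ᵥ V) i : ℤ) : ZMod p) = 0) ↔
        walkMatrix (M.map φ) (φ ∘ w) *ᵥ (φ ∘ V) = 0 := by
    rw [← walkMatrix_map, funext_iff]
    refine forall_congr' fun i => ?_
    rw [← RingHom.map_mulVec]
    rfl
  rw [reduce, reduce]
  refine walkMatrix_mulVec_eq_zero_iff_of_charpoly_eq ?_ ?_ ?_ ?_ _
  · rw [charpoly_map, charpoly_map, hchar]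
  · rwa [← walkMatrix_map]
  · rwa [← walkMatrix_map]
  · rwa [charpoly_map]

/-- **Lemma.** Let `X, Y` be symmetric integer matrices with the same characteristic polynomial.
If `rank_p(W_{X,ζ}) = rank_p(W_{Y,η}) = n − 1` and the characteristic polynomial of `X` reduced
mod `p` has no two distinct roots in `𝔽_p`, then the mod-`p` kernels of the two walk matrices
coincide. -/
theorem walk_kernels_eq_of_no_two_distinct_roots
    {n : ℕ} (X Y : Matrix (Fin n) (Fin n) ℤ) (ζ η : Fin n → ℤ)
    (hXsymm : X.IsSymm) (hYsymm : Y.IsSymm)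
    (hchar : X.charpoly = Y.charpoly)
    (p : ℕ) (hp : p.Prime) [Fact p.Prime]
    (hrankX : ((walkMatrix X ζ).map (Int.cast : ℤ → ZMod p)).rank = n - 1)
    (hrankY : ((walkMatrix Y η).map (Int.cast : ℤ → ZMod p)).rank = n - 1)
    (hroots : ∀ a b : ZMod p, (X.charpoly.map (Int.castRingHom (ZMod p))).IsRoot a →
      (X.charpoly.map (Int.castRingHom (ZMod p))).IsRoot b → a = b) :
    ∀ V : Fin n → ℤ,
      (∀ i, (((walkMatrix X ζ *ᵥ V) i : ℤ) : ZMod p) = 0) ↔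
      (∀ i, (((walkMatrix Y η *ᵥ V) i : ℤ) : ZMod p) = 0) :=
  walk_kernels_eq_of_no_two_distinct_roots_general X Y ζ η hchar p hrankX hrankY hroots
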